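/- (Commutator structure) Let H₀ be the long-range free operator (H₀u)_n = Σ_k a_k u_{n-k} with |a_k| ≤ A₁e^{-a|k|}. For a sequence γ = {γ_k} with |γ_k| ≤ Ce^{-c|k|}, define (X^γ_{2p}u)_n = n^p Σ_k γ_k u_{n-k}. Then the commutator X̂^γ_{2p} = −i[H₀, X^γ_{2p}] can be written as Σ_{j=0}^{p-1} X^{γ^j}_{2j} for new sequences γ^j with |γ^j_k| ≤ C_j e^{-c_j|k|}, where explicitly (X̂^γ_{2p}u)_n = −i Σ_m (Σ_k (n^p − (n−k)^p) a_k γ_{m−k}) u_{n−m}. -/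

import Mathlib

/-!
Expanding `n ^ p - (n - k) ^ p` by the binomial theorem writes it as `∑_{j<p} n ^ j w_j(k)` with
`w_j(k)` a multiple of `k ^ (p - j)`, so the commutator kernel splits as `∑_{j<p} n ^ j γ^j_m`,
where `γ^j` is the convolution of `γ` with the polynomially weighted hopping `w_j a`.
Such a convolution still decays exponentially: from `|m| ≤ |k| + |m - k|`, with `β = min α c / 2`,
`e^{-α|k|} e^{-c|m-k|} ≤ e^{-β|m|} e^{-(α-β)|k|}`, and `|k| ^ q e^{-(α-β)|k|}` is summable.
-/

open Finset

lemma summable_abs_pow_mul_exp_neg_mul_abs (q : ℕ) {δ : ℝ} (hδ : 0 < δ) :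
    Summable fun k : ℤ => |(k : ℝ)| ^ q * Real.exp (-δ * |(k : ℝ)|) := by
  have hnat : Summable fun n : ℕ => |((n : ℤ) : ℝ)| ^ q * Real.exp (-δ * |((n : ℤ) : ℝ)|) := by
    refine (summable_pow_mul_geometric_of_norm_lt_one q (r := Real.exp (-δ)) ?_).congr fun n => ?_
    · rw [Real.norm_of_nonneg (Real.exp_pos _).le, Real.exp_lt_one_iff]
      linarith
    · rw [Int.cast_natCast, abs_of_nonneg n.cast_nonneg, ← Real.exp_nat_mul]
      ring_nf
  exact hnat.of_nat_of_neg (hnat.congr fun n => by simp)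

lemma exp_neg_mul_abs_mul_exp_neg_mul_abs_sub_le {α β c : ℝ} (hβ : 0 ≤ β) (hβc : β ≤ c)
    (m k : ℤ) :
    Real.exp (-α * |(k : ℝ)|) * Real.exp (-c * |((m - k : ℤ) : ℝ)|)
      ≤ Real.exp (-β * |(m : ℝ)|) * Real.exp (-(α - β) * |(k : ℝ)|) := by
  rw [← Real.exp_add, ← Real.exp_add, Real.exp_le_exp]
  have htri : |(m : ℝ)| ≤ |(k : ℝ)| + |((m - k : ℤ) : ℝ)| := by
    simpa using abs_add_le (k : ℝ) ((m : ℝ) - k)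
  nlinarith [abs_nonneg ((m - k : ℤ) : ℝ)]

section WeightedConvolution

variable {w f g : ℤ → ℂ} {B A C α β c : ℝ} {q : ℕ}

lemma norm_weighted_mul_mul_le (hβ : 0 ≤ β) (hβc : β ≤ c)
    (hw : ∀ k, ‖w k‖ ≤ B * |(k : ℝ)| ^ q)
    (hf : ∀ k, ‖f k‖ ≤ A * Real.exp (-α * |(k : ℝ)|))
    (hg : ∀ k, ‖g k‖ ≤ C * Real.exp (-c * |(k : ℝ)|)) (m k : ℤ) :
    ‖w k * f k * g (m - k)‖
      ≤ B * A * C * Real.exp (-β * |(m : ℝ)|)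
        * (|(k : ℝ)| ^ q * Real.exp (-(α - β) * |(k : ℝ)|)) := by
  have hwk : 0 ≤ B * |(k : ℝ)| ^ q := (norm_nonneg _).trans (hw k)
  have hA : 0 ≤ A := by simpa using (norm_nonneg _).trans (hf 0)
  have hC : 0 ≤ C := by simpa using (norm_nonneg _).trans (hg 0)
  calc ‖w k * f k * g (m - k)‖
      ≤ B * |(k : ℝ)| ^ q * (A * Real.exp (-α * |(k : ℝ)|))
          * (C * Real.exp (-c * |((m - k : ℤ) : ℝ)|)) := by
        rw [norm_mul, norm_mul]
        exact mul_le_mul (mul_le_mul (hw k) (hf k) (norm_nonneg _) hwk) (hg _) (norm_nonneg _)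
          (mul_nonneg hwk (by positivity))
    _ = B * |(k : ℝ)| ^ q * A * C
          * (Real.exp (-α * |(k : ℝ)|) * Real.exp (-c * |((m - k : ℤ) : ℝ)|)) := by ring
    _ ≤ B * |(k : ℝ)| ^ q * A * C
          * (Real.exp (-β * |(m : ℝ)|) * Real.exp (-(α - β) * |(k : ℝ)|)) := by
        exact mul_le_mul_of_nonneg_left (exp_neg_mul_abs_mul_exp_neg_mul_abs_sub_le hβ hβc m k)
          (mul_nonneg (mul_nonneg hwk hA) hC)
    _ = _ := by ring

lemma summable_weighted_mul_mul (hα : 0 < α) (hc : 0 ≤ c)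
    (hw : ∀ k, ‖w k‖ ≤ B * |(k : ℝ)| ^ q)
    (hf : ∀ k, ‖f k‖ ≤ A * Real.exp (-α * |(k : ℝ)|))
    (hg : ∀ k, ‖g k‖ ≤ C * Real.exp (-c * |(k : ℝ)|)) (m : ℤ) :
    Summable fun k => w k * f k * g (m - k) :=
  .of_norm_bounded ((summable_abs_pow_mul_exp_neg_mul_abs q (by simpa using hα)).mul_left _)
    (norm_weighted_mul_mul_le le_rfl hc hw hf hg m)

lemma exists_norm_tsum_weighted_mul_mul_le (hα : 0 < α) (hc : 0 < c)
    (hw : ∀ k, ‖w k‖ ≤ B * |(k : ℝ)| ^ q)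
    (hf : ∀ k, ‖f k‖ ≤ A * Real.exp (-α * |(k : ℝ)|))
    (hg : ∀ k, ‖g k‖ ≤ C * Real.exp (-c * |(k : ℝ)|)) :
    ∃ C' c' : ℝ, 0 < C' ∧ 0 < c' ∧
      ∀ m : ℤ, ‖∑' k, w k * f k * g (m - k)‖ ≤ C' * Real.exp (-c' * |(m : ℝ)|) := by
  obtain ⟨β, hβ, hβc, hβα⟩ : ∃ β, 0 < β ∧ β ≤ c ∧ β < α :=
    ⟨min α c / 2, by positivity, by linarith [min_le_right α c, lt_min hα hc],
      by linarith [min_le_left α c, lt_min hα hc]⟩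
  set S := ∑' k : ℤ, |(k : ℝ)| ^ q * Real.exp (-(α - β) * |(k : ℝ)|)
  have hS := summable_abs_pow_mul_exp_neg_mul_abs q (sub_pos.2 hβα)
  refine ⟨max 1 (B * A * C * S), β, by positivity, hβ, fun m => ?_⟩
  calc ‖∑' k, w k * f k * g (m - k)‖
      ≤ B * A * C * Real.exp (-β * |(m : ℝ)|) * S :=
        tsum_of_norm_bounded (hS.hasSum.mul_left _) (norm_weighted_mul_mul_le hβ.le hβc hw hf hg m)
    _ = B * A * C * S * Real.exp (-β * |(m : ℝ)|) := by ring
    _ ≤ max 1 (B * A * C * S) * Real.exp (-β * |(m : ℝ)|) := by gcongr; exact le_max_right _ _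

end WeightedConvolution

lemma pow_sub_sub_pow_eq_neg_sum {R : Type*} [CommRing R] (p : ℕ) (x y : R) :
    x ^ p - (x - y) ^ p = -∑ j ∈ range p, p.choose j * x ^ j * (-y) ^ (p - j) := by
  rw [sub_eq_add_neg x y, add_pow, sum_range_succ]
  simp only [Nat.sub_self, pow_zero, Nat.choose_self, Nat.cast_one, mul_one]
  rw [sub_add_cancel_right, neg_inj]
  exact sum_congr rfl fun j _ => by ring

def commutatorWeight (p j : ℕ) (k : ℤ) : ℂ :=
  Complex.I * p.choose j * (-(k : ℂ)) ^ (p - j)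

lemma neg_I_mul_pow_sub_sub_pow (p : ℕ) (x : ℂ) (k : ℤ) :
    -Complex.I * (x ^ p - (x - k) ^ p) = ∑ j ∈ range p, x ^ j * commutatorWeight p j k := by
  rw [pow_sub_sub_pow_eq_neg_sum, mul_neg, ← neg_mul, neg_neg, mul_sum]
  exact sum_congr rfl fun j _ => by unfold commutatorWeight; ring

lemma norm_commutatorWeight (p j : ℕ) (k : ℤ) :
    ‖commutatorWeight p j k‖ = p.choose j * |(k : ℝ)| ^ (p - j) := by
  simp [commutatorWeight]

theorem stmt10_general (p : ℕ) (a γ : ℤ → ℂ) (A₁ α C c : ℝ)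
    (hα : 0 < α) (hc : 0 < c)
    (ha : ∀ k : ℤ, ‖a k‖ ≤ A₁ * Real.exp (-α * |(k : ℝ)|))
    (hγ : ∀ k : ℤ, ‖γ k‖ ≤ C * Real.exp (-c * |(k : ℝ)|)) :
    ∃ (γ' : ℕ → ℤ → ℂ) (C' c' : ℕ → ℝ),
      (∀ j < p, 0 < C' j ∧ 0 < c' j ∧
        ∀ k : ℤ, ‖γ' j k‖ ≤ C' j * Real.exp (-(c' j) * |(k : ℝ)|)) ∧
      ∀ n m : ℤ,
        (-Complex.I) * ∑' k : ℤ, ((n : ℂ) ^ p - ((n : ℂ) - (k : ℂ)) ^ p) * a k * γ (m - k)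
          = ∑ j ∈ Finset.range p, (n : ℂ) ^ j * γ' j m := by
  have hw (j : ℕ) (k : ℤ) := (norm_commutatorWeight p j k).le
  choose C' c' hC' hc' hdecay using fun j =>
    exists_norm_tsum_weighted_mul_mul_le hα hc (hw j) ha hγ
  refine ⟨fun j m => ∑' k, commutatorWeight p j k * a k * γ (m - k), C', c',
    fun j _ => ⟨hC' j, hc' j, hdecay j⟩, fun n m => ?_⟩
  have hsummable (j : ℕ) : Summable fun k => commutatorWeight p j k * a k * γ (m - k) :=
    summable_weighted_mul_mul hα hc.le (hw j) ha hγ m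
  calc -Complex.I * ∑' k : ℤ, ((n : ℂ) ^ p - ((n : ℂ) - (k : ℂ)) ^ p) * a k * γ (m - k)
      = ∑' k : ℤ, ∑ j ∈ range p, (n : ℂ) ^ j * (commutatorWeight p j k * a k * γ (m - k)) := by
        rw [← tsum_mul_left]
        refine tsum_congr fun k => ?_
        rw [← mul_assoc, ← mul_assoc, neg_I_mul_pow_sub_sub_pow, sum_mul, sum_mul]
        exact sum_congr rfl fun j _ => by ring
    _ = ∑ j ∈ range p, (n : ℂ) ^ j * ∑' k, commutatorWeight p j k * a k * γ (m - k) := by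
        rw [Summable.tsum_finsetSum fun j _ => (hsummable j).mul_left _]
        simp_rw [tsum_mul_left]

/-- commutator structure: for the long-range free operator with
hopping `a` (`|a_k| ≤ A₁ e^{-α|k|}`) and an exponentially decaying sequence
`γ`, the kernel of the commutator `X̂^γ_{2p} = -i[H₀, X^γ_{2p}]`, namely
`(n,m) ↦ -i Σ_k (n^p - (n-k)^p) a_k γ_{m-k}`, equals `Σ_{j=0}^{p-1} n^j γ^j_m`
for new exponentially decaying sequences `γ^0, …, γ^{p-1}`; i.e.
`X̂^γ_{2p} = Σ_{j<p} X^{γ^j}_{2j}`. -/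
theorem stmt10 (p : ℕ) (hp : 1 ≤ p) (a γ : ℤ → ℂ) (A₁ α C c : ℝ)
    (hA₁ : 0 < A₁) (hα : 0 < α) (hC : 0 < C) (hc : 0 < c)
    (ha : ∀ k : ℤ, ‖a k‖ ≤ A₁ * Real.exp (-α * |(k : ℝ)|))
    (hsym : ∀ k : ℤ, a (-k) = starRingEnd ℂ (a k))
    (hγ : ∀ k : ℤ, ‖γ k‖ ≤ C * Real.exp (-c * |(k : ℝ)|)) :
    ∃ (γ' : ℕ → ℤ → ℂ) (C' c' : ℕ → ℝ),
      (∀ j < p, 0 < C' j ∧ 0 < c' j ∧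
        ∀ k : ℤ, ‖γ' j k‖ ≤ C' j * Real.exp (-(c' j) * |(k : ℝ)|)) ∧
      ∀ n m : ℤ,
        (-Complex.I) * ∑' k : ℤ, ((n : ℂ) ^ p - ((n : ℂ) - (k : ℂ)) ^ p) * a k * γ (m - k)
          = ∑ j ∈ Finset.range p, (n : ℂ) ^ j * γ' j m :=
  stmt10_general p a γ A₁ α C c hα hc ha hγ
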